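/- Let b : ℝ → ℝ^N and a : ℝ → [0,∞) be measurable and suppose that for all ε > 0 and z ∈ ℝ^N, |{ξ : (1/4)|b(ξ) − z|² + a(ξ) < ε}| ≤ ι(4ε) for a nondecreasing ι. Then for every δ > 0 and z ∈ ℝ^N, ∫_ℝ e^{−δ((1/4)|b(ξ)−2πz|² + a(ξ))} dξ ≤ (1/4) ∫₀^∞ e^{−τ/4} ι(τ/δ) dτ. -/

import Mathlib

open MeasureTheory Set Real ENNReal

/-! Writing `e^{-δ f(ξ)} = ∫_{f(ξ)}^∞ δ e^{-δ s} ds` and applying Tonelli turns the left-hand side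
into `∫ δ e^{-δ s} |{f < s}| ds`. Since `f ≥ 0` only `s > 0` contributes, and there the hypothesis
(applied at the centre `2πz`) bounds `|{f < s}|` by `ι(4s)`; the substitution `τ = 4δs` then
produces the right-hand side. -/

theorem lintegral_comp_mul_left_Ioi (g : ℝ → ℝ≥0∞) (a : ℝ) {c : ℝ} (hc : 0 < c) :
    ∫⁻ s in Ioi a, g (c * s) = ENNReal.ofReal c⁻¹ * ∫⁻ τ in Ioi (c * a), g τ := by
  have hpres : MeasurePreserving (c * ·) volume (Measure.map (c * ·) volume) :=
    ⟨measurable_const_mul c, rfl⟩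
  have hemb : MeasurableEmbedding (c * ·) :=
    (Homeomorph.mulLeft₀ c hc.ne').toMeasurableEquiv.measurableEmbedding
  have hIoi : Ioi a = (c * ·) ⁻¹' Ioi (c * a) := by
    rw [preimage_const_mul_Ioi₀ _ hc, mul_div_cancel_left₀ _ hc.ne']
  rw [hIoi, hpres.setLIntegral_comp_preimage_emb hemb, Real.map_volume_mul_left hc.ne',
    Measure.restrict_smul, lintegral_smul_measure, smul_eq_mul, abs_of_pos (inv_pos.mpr hc)]

theorem lintegral_Ioi_mul_exp_neg_mul {δ : ℝ} (hδ : 0 < δ) (c : ℝ) :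
    ∫⁻ s in Ioi c, ENNReal.ofReal (δ * exp (-δ * s)) = ENNReal.ofReal (exp (-δ * c)) := by
  have hint : IntegrableOn (fun s ↦ δ * exp (-δ * s)) (Ioi c) :=
    (integrableOn_exp_mul_Ioi (neg_lt_zero.mpr hδ) c).const_mul δ
  rw [← ofReal_integral_eq_lintegral_ofReal hint (ae_of_all _ fun s ↦ by positivity),
    integral_const_mul, integral_exp_mul_Ioi (neg_lt_zero.mpr hδ)]
  field_simp

theorem lintegral_lintegral_Ioi_eq_lintegral_mul_measure_lt {α : Type*} [MeasurableSpace α]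
    {μ : Measure α} [SFinite μ] {f : α → ℝ} (hf : Measurable f) {φ : ℝ → ℝ≥0∞}
    (hφ : Measurable φ) :
    ∫⁻ x, (∫⁻ s in Ioi (f x), φ s) ∂μ = ∫⁻ s, φ s * μ {x | f x < s} := by
  set E : Set (α × ℝ) := {p | f p.1 < p.2}
  have hE : MeasurableSet E := measurableSet_lt (hf.comp measurable_fst) measurable_snd
  calc ∫⁻ x, (∫⁻ s in Ioi (f x), φ s) ∂μ
        = ∫⁻ x, (∫⁻ s, E.indicator (φ ∘ Prod.snd) (x, s)) ∂μ := by
        congr! 2 with x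
        rw [← lintegral_indicator measurableSet_Ioi]
        rfl
    _ = ∫⁻ s, ∫⁻ x, E.indicator (φ ∘ Prod.snd) (x, s) ∂μ :=
        lintegral_lintegral_swap (f := fun x s ↦ E.indicator (φ ∘ Prod.snd) (x, s))
          ((hφ.comp measurable_snd).indicator hE).aemeasurable
    _ = ∫⁻ s, φ s * μ {x | f x < s} := by
        congr! 2 with s
        rw [← lintegral_indicator_const (measurableSet_lt hf measurable_const)]
        rfl

theorem lintegral_exp_neg_mul_eq_lintegral_mul_measure_lt {α : Type*} [MeasurableSpace α]
    {μ : Measure α} [SFinite μ] {f : α → ℝ} (hf : Measurable f) {δ : ℝ} (hδ : 0 < δ) :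
    ∫⁻ x, ENNReal.ofReal (exp (-δ * f x)) ∂μ =
      ∫⁻ s, ENNReal.ofReal (δ * exp (-δ * s)) * μ {x | f x < s} := by
  have hφ : Measurable fun s ↦ ENNReal.ofReal (δ * exp (-δ * s)) := by fun_prop
  simp_rw [← lintegral_Ioi_mul_exp_neg_mul hδ]
  exact lintegral_lintegral_Ioi_eq_lintegral_mul_measure_lt hf hφ

theorem lintegral_exp_neg_mul_le_of_measure_lt_le {α : Type*} [MeasurableSpace α]
    {μ : Measure α} [SFinite μ] {f : α → ℝ} (hf : Measurable f) (hf0 : ∀ x, 0 ≤ f x)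
    {h : ℝ → ℝ} (hlevel : ∀ s > 0, μ {x | f x < s} ≤ ENNReal.ofReal (h s)) {δ : ℝ} (hδ : 0 < δ) :
    ∫⁻ x, ENNReal.ofReal (exp (-δ * f x)) ∂μ ≤
      ∫⁻ s in Ioi 0, ENNReal.ofReal (δ * exp (-δ * s) * h s) := by
  have hlevel' : ∀ s, μ {x | f x < s} ≤ (Ioi 0).indicator (fun s ↦ ENNReal.ofReal (h s)) s := by
    intro s
    by_cases hs : 0 < s
    · simpa [indicator_of_mem (mem_Ioi.mpr hs)] using hlevel s hs
    · rw [indicator_of_notMem (mt mem_Ioi.mp hs), nonpos_iff_eq_zero,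
        measure_eq_zero_iff_ae_notMem]
      exact ae_of_all _ fun x (hx : f x < s) ↦ hs ((hf0 x).trans_lt hx)
  have hsplit : ∀ s, ENNReal.ofReal (δ * exp (-δ * s) * h s) =
      ENNReal.ofReal (δ * exp (-δ * s)) * ENNReal.ofReal (h s) :=
    fun s ↦ ENNReal.ofReal_mul (by positivity)
  simp_rw [hsplit, lintegral_exp_neg_mul_eq_lintegral_mul_measure_lt hf hδ,
    ← lintegral_indicator measurableSet_Ioi, indicator_mul_right]
  exact lintegral_mono fun s ↦ mul_le_mul_right (hlevel' s) _

theorem lintegral_Ioi_mul_exp_neg_mul_mul_comp_four_mul {δ : ℝ} (hδ : 0 < δ) (h : ℝ → ℝ) :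
    ∫⁻ s in Ioi 0, ENNReal.ofReal (δ * exp (-δ * s) * h (4 * s)) =
      (1/4 : ℝ≥0∞) * ∫⁻ τ in Ioi 0, ENNReal.ofReal (exp (-τ / 4) * h (τ / δ)) := by
  have hscale : ∀ s, ENNReal.ofReal (δ * exp (-δ * s) * h (4 * s)) =
      ENNReal.ofReal δ * ENNReal.ofReal (exp (-(4 * δ * s) / 4) * h (4 * δ * s / δ)) := by
    intro s
    rw [← ENNReal.ofReal_mul hδ.le, show -(4 * δ * s) / 4 = -δ * s by ring,
      show 4 * δ * s / δ = 4 * s by field_simp, mul_assoc]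
  have hconst : ENNReal.ofReal δ * ENNReal.ofReal (4 * δ)⁻¹ = 1 / 4 := by
    rw [← ENNReal.ofReal_mul hδ.le, show δ * (4 * δ)⁻¹ = 4⁻¹ by field_simp, one_div,
      ENNReal.ofReal_inv_of_pos four_pos, ENNReal.ofReal_ofNat]
  simp_rw [hscale]
  rw [lintegral_const_mul' _ _ ENNReal.ofReal_ne_top,
    lintegral_comp_mul_left_Ioi (fun τ ↦ ENNReal.ofReal (exp (-τ / 4) * h (τ / δ))) 0
      (by positivity), mul_zero, ← mul_assoc, hconst]

theorem exp_level_set_estimate_general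
    (N : ℕ)
    (b : ℝ → EuclideanSpace ℝ (Fin N)) (a : ℝ → ℝ)
    (hb : Measurable b) (ha : Measurable a) (ha0 : ∀ ξ, 0 ≤ a ξ)
    (ι : ℝ → ℝ)
    (hlevel : ∀ τ > (0:ℝ), ∀ z : EuclideanSpace ℝ (Fin N),
      volume {ξ : ℝ | ‖b ξ - z‖ ^ 2 + a ξ < 4 * τ} ≤ ENNReal.ofReal (ι (4 * τ)))
    (δ : ℝ) (hδ : 0 < δ) (z : EuclideanSpace ℝ (Fin N)) :
    ∫⁻ ξ : ℝ, ENNReal.ofReal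
        (Real.exp (-δ * ((1/4) * ‖b ξ - (2 * Real.pi) • z‖ ^ 2 + a ξ))) ≤
      (1/4 : ℝ≥0∞) * ∫⁻ τ in Set.Ioi (0:ℝ), ENNReal.ofReal (Real.exp (-τ / 4) * ι (τ / δ)) := by
  set f : ℝ → ℝ := fun ξ ↦ (1/4) * ‖b ξ - (2 * π) • z‖ ^ 2 + a ξ
  have hf : Measurable f := by fun_prop
  have hf0 : ∀ ξ, 0 ≤ f ξ := fun ξ ↦ add_nonneg (by positivity) (ha0 ξ)
  have hlevel_f : ∀ s > 0, volume {ξ | f ξ < s} ≤ ENNReal.ofReal (ι (4 * s)) := by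
    refine fun s hs ↦
      le_trans (measure_mono fun ξ (hξ : f ξ < s) ↦ ?_) (hlevel s hs ((2 * π) • z))
    show _ < 4 * s
    linarith [show (1/4) * ‖b ξ - (2 * π) • z‖ ^ 2 + a ξ < s from hξ, ha0 ξ]
  calc ∫⁻ ξ, ENNReal.ofReal (exp (-δ * f ξ))
      ≤ ∫⁻ s in Ioi 0, ENNReal.ofReal (δ * exp (-δ * s) * ι (4 * s)) :=
        lintegral_exp_neg_mul_le_of_measure_lt_le hf hf0 hlevel_f hδ
    _ = _ := lintegral_Ioi_mul_exp_neg_mul_mul_comp_four_mul hδ ι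

/-- The layer-cake estimate in the proof of Lemma B.1:
`∫ e^{−δ((1/4)|b(ξ)−2πz|² + a(ξ))} dξ ≤ (1/4) ∫₀^∞ e^{−τ/4} ι(τ/δ) dτ`. -/
theorem exp_level_set_estimate
    (N : ℕ) (hN : 1 ≤ N)
    (b : ℝ → EuclideanSpace ℝ (Fin N)) (a : ℝ → ℝ)
    (hb : Measurable b) (ha : Measurable a) (ha0 : ∀ ξ, 0 ≤ a ξ)
    (ι : ℝ → ℝ) (hι0 : ∀ ε, 0 ≤ ε → 0 ≤ ι ε)
    (hιmono : MonotoneOn ι (Set.Ici 0))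
    (hlevel : ∀ τ > (0:ℝ), ∀ z : EuclideanSpace ℝ (Fin N),
      volume {ξ : ℝ | ‖b ξ - z‖ ^ 2 + a ξ < 4 * τ} ≤ ENNReal.ofReal (ι (4 * τ)))
    (δ : ℝ) (hδ : 0 < δ) (z : EuclideanSpace ℝ (Fin N)) :
    ∫⁻ ξ : ℝ, ENNReal.ofReal
        (Real.exp (-δ * ((1/4) * ‖b ξ - (2 * Real.pi) • z‖ ^ 2 + a ξ))) ≤
      (1/4 : ℝ≥0∞) * ∫⁻ τ in Set.Ioi (0:ℝ), ENNReal.ofReal (Real.exp (-τ / 4) * ι (τ / δ)) :=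
  exp_level_set_estimate_general N b a hb ha ha0 ι hlevel δ hδ z
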